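/- arXiv:2106.09191 — 2 statements merged into one kernel-verified Lean document; each statement's English description precedes it below -/
import Mathlib

section
/- Let E be a real Banach space, let T > 0, N ∈ ℕ, Δt := T/N and tₙ := nΔt. Let φ : [0, T] → E be twice continuously differentiable, and for n = 1,…,N set rₙ := φ'(tₙ) − (φ(tₙ) − φ(tₙ₋₁))/Δt. Then for every 1 ≤ k ≤ N, Δt · Σ_{n=1}^{k} ‖rₙ‖² ≤ (Δt²/3) ∫_0^{t_k} ‖φ''(t)‖² dt. -/
/-! Integrating by parts, `(b - a) • φ' b - (φ b - φ a) = ∫ t in a..b, (t - a) • φ'' t`, so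
by Cauchy–Schwarz and `∫ t in a..b, (t - a) ^ 2 = (b - a) ^ 3 / 3` the squared norm of this
Taylor remainder is at most `(b - a) ^ 3 / 3 * ∫ t in a..b, ‖φ'' t‖ ^ 2`. The residual
`φ' b - slope φ a b` is this remainder divided by `b - a`, so the step `[tₙ₋₁, tₙ]` contributes at
most `Δt ^ 2 / 3` times the integral of `‖φ''‖ ^ 2` over it, and these integrals add up to the
integral over `[0, t_k]`. -/

open MeasureTheory Set
open scoped Interval

theorem integral_mul_sq_le_integral_sq_mul_integral_sq {α : Type*} [MeasurableSpace α]
    {μ : Measure α} {f g : α → ℝ} (hf : Integrable (fun x ↦ f x ^ 2) μ)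
    (hg : Integrable (fun x ↦ g x ^ 2) μ) (hfg : Integrable (fun x ↦ f x * g x) μ) :
    (∫ x, f x * g x ∂μ) ^ 2 ≤ (∫ x, f x ^ 2 ∂μ) * ∫ x, g x ^ 2 ∂μ := by
  have hquad : ∀ s : ℝ, 0 ≤ (∫ x, f x ^ 2 ∂μ) * (s * s) + 2 * (∫ x, f x * g x ∂μ) * s +
      ∫ x, g x ^ 2 ∂μ := fun s ↦ by
    have hexpand : (fun x ↦ (s * f x + g x) ^ 2) =
        fun x ↦ s * s * f x ^ 2 + 2 * s * (f x * g x) + g x ^ 2 := by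
      ext x; ring
    have h : 0 ≤ ∫ x, (s * f x + g x) ^ 2 ∂μ := integral_nonneg fun x ↦ sq_nonneg _
    have hsum : Integrable (fun x ↦ s * s * f x ^ 2 + 2 * s * (f x * g x)) μ :=
      (hf.const_mul _).add (hfg.const_mul _)
    rw [hexpand, integral_add hsum hg,
      integral_add (hf.const_mul _) (hfg.const_mul _), integral_const_mul,
      integral_const_mul] at h
    linarith
  have hdisc := discrim_le_zero hquad
  rw [discrim] at hdisc
  linarith

open intervalIntegral

section Taylor

variable {E : Type*} [NormedAddCommGroup E] [NormedSpace ℝ E] [CompleteSpace E]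
  {φ φ' φ'' : ℝ → E} {a b : ℝ}

theorem integral_sub_smul_eq_taylor_remainder
    (hφ : ∀ t ∈ [[a, b]], HasDerivWithinAt φ (φ' t) [[a, b]] t)
    (hφ' : ∀ t ∈ [[a, b]], HasDerivWithinAt φ' (φ'' t) [[a, b]] t)
    (hφ'' : IntervalIntegrable φ'' volume a b) :
    ∫ t in a..b, (t - a) • φ'' t = (b - a) • φ' b - (φ b - φ a) := by
  have hφ'_int : IntervalIntegrable φ' volume a b :=
    ContinuousOn.intervalIntegrable fun t ht ↦ (hφ' t ht).continuousWithinAt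
  have hftc : ∫ t in a..b, φ' t = φ b - φ a :=
    integral_eq_sub_of_hasDeriv_right (fun t ht ↦ (hφ t ht).continuousWithinAt)
      (fun t ht ↦ ((hφ t (mem_Icc_of_Ioo ht)).hasDerivAt
        (Icc_mem_nhds ht.1 ht.2)).hasDerivWithinAt)
      hφ'_int
  rw [integral_smul_deriv_eq_deriv_smul_of_hasDerivWithinAt (u := fun t ↦ t - a) (u' := fun _ ↦ 1)
    (fun t _ ↦ ((hasDerivAt_id t).sub_const a).hasDerivWithinAt) hφ' intervalIntegrable_const hφ'']
  simp only [one_smul, sub_self, zero_smul, sub_zero, hftc]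

theorem norm_taylor_remainder_sq_le (hab : a ≤ b)
    (hφ : ∀ t ∈ Icc a b, HasDerivWithinAt φ (φ' t) (Icc a b) t)
    (hφ' : ∀ t ∈ Icc a b, HasDerivWithinAt φ' (φ'' t) (Icc a b) t)
    (hφ'' : ContinuousOn φ'' (Icc a b)) :
    ‖(b - a) • φ' b - (φ b - φ a)‖ ^ 2 ≤ (b - a) ^ 3 / 3 * ∫ t in a..b, ‖φ'' t‖ ^ 2 := by
  rw [← uIcc_of_le hab] at hφ hφ' hφ''
  have hint : ∀ g : ℝ → ℝ, ContinuousOn g [[a, b]] → IntegrableOn g (Ioc a b) :=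
    fun g hg ↦ hg.intervalIntegrable.1
  have hnorm : ‖∫ t in a..b, (t - a) • φ'' t‖ ≤ ∫ t in a..b, (t - a) * ‖φ'' t‖ := by
    refine norm_integral_le_of_norm_le hab (ae_of_all _ fun t ht ↦ ?_)
      (ContinuousOn.intervalIntegrable (by fun_prop))
    rw [norm_smul, Real.norm_of_nonneg (sub_nonneg.2 ht.1.le)]
  have hcs : (∫ t in a..b, (t - a) * ‖φ'' t‖) ^ 2 ≤
      (∫ t in a..b, (t - a) ^ 2) * ∫ t in a..b, ‖φ'' t‖ ^ 2 := by
    simpa only [integral_of_le hab] using integral_mul_sq_le_integral_sq_mul_integral_sq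
      (hint _ (by fun_prop)) (hint _ (by fun_prop)) (hint _ (by fun_prop))
  have hmoment : ∫ t in a..b, (t - a) ^ 2 = (b - a) ^ 3 / 3 := by
    norm_num [integral_comp_sub_right fun t ↦ t ^ 2]
  rw [← integral_sub_smul_eq_taylor_remainder hφ hφ' hφ''.intervalIntegrable, ← hmoment]
  exact (pow_le_pow_left₀ (norm_nonneg _) hnorm 2).trans hcs

theorem mul_norm_deriv_sub_slope_sq_le (hab : a ≤ b)
    (hφ : ∀ t ∈ Icc a b, HasDerivWithinAt φ (φ' t) (Icc a b) t)
    (hφ' : ∀ t ∈ Icc a b, HasDerivWithinAt φ' (φ'' t) (Icc a b) t)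
    (hφ'' : ContinuousOn φ'' (Icc a b)) :
    (b - a) * ‖φ' b - slope φ a b‖ ^ 2 ≤ (b - a) ^ 2 / 3 * ∫ t in a..b, ‖φ'' t‖ ^ 2 := by
  obtain rfl | hlt := hab.eq_or_lt
  · simp
  have hh : 0 < b - a := sub_pos.2 hlt
  have hres : φ' b - slope φ a b = (b - a)⁻¹ • ((b - a) • φ' b - (φ b - φ a)) := by
    rw [slope_def_module, smul_sub _ ((b - a) • φ' b), inv_smul_smul₀ hh.ne']
  rw [hres, norm_smul, mul_pow, Real.norm_of_nonneg (inv_nonneg.2 hh.le)]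
  calc (b - a) * ((b - a)⁻¹ ^ 2 * ‖(b - a) • φ' b - (φ b - φ a)‖ ^ 2)
      = (b - a)⁻¹ * ‖(b - a) • φ' b - (φ b - φ a)‖ ^ 2 := by field_simp
    _ ≤ (b - a)⁻¹ * ((b - a) ^ 3 / 3 * ∫ t in a..b, ‖φ'' t‖ ^ 2) := by
        gcongr; exact norm_taylor_remainder_sq_le hab hφ hφ' hφ''
    _ = (b - a) ^ 2 / 3 * ∫ t in a..b, ‖φ'' t‖ ^ 2 := by field_simp

end Taylor

theorem sum_integral_Icc_uniform_grid {E : Type*} [NormedAddCommGroup E] [NormedSpace ℝ E]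
    {f : ℝ → E} {h : ℝ} (hh : 0 ≤ h) (k : ℕ) (hf : IntervalIntegrable f volume 0 (k * h)) :
    ∑ n ∈ Finset.Icc 1 k, ∫ t in ((n : ℝ) - 1) * h..n * h, f t = ∫ t in 0..k * h, f t := by
  induction k with
  | zero => simp
  | succ k ih =>
    push_cast at hf ⊢
    have hmid : (k : ℝ) * h ∈ [[0, (k + 1) * h]] :=
      mem_uIcc_of_le (by positivity) (by nlinarith)
    have hleft := hf.mono_set (uIcc_subset_uIcc_left hmid)
    have hright := hf.mono_set (uIcc_subset_uIcc_right hmid)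
    rw [Finset.sum_Icc_succ_top (by omega), ih hleft, Nat.cast_succ, add_sub_cancel_right,
      integral_add_adjacent_intervals hleft hright]

theorem backward_euler_consistency_l2_bound_general
    {E : Type*} [NormedAddCommGroup E] [NormedSpace ℝ E] [CompleteSpace E]
    (T : ℝ) (hT : 0 < T) (N : ℕ) (Δt : ℝ) (hΔt : Δt = T / N)
    (φ φ' φ'' : ℝ → E)
    (hd1 : ∀ t ∈ Set.Icc (0 : ℝ) T, HasDerivWithinAt φ (φ' t) (Set.Icc (0 : ℝ) T) t)
    (hd2 : ∀ t ∈ Set.Icc (0 : ℝ) T, HasDerivWithinAt φ' (φ'' t) (Set.Icc (0 : ℝ) T) t)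
    (hcont : ContinuousOn φ'' (Set.Icc (0 : ℝ) T))
    (k : ℕ) (hkN : k ≤ N) :
    Δt * ∑ n ∈ Finset.Icc 1 k,
        ‖φ' ((n : ℝ) * Δt) -
            Δt⁻¹ • (φ ((n : ℝ) * Δt) - φ (((n : ℝ) - 1) * Δt))‖ ^ 2 ≤
      (Δt ^ 2 / 3) * ∫ t in (0 : ℝ)..((k : ℝ) * Δt), ‖φ'' t‖ ^ 2 := by
  have hΔt0 : 0 ≤ Δt := hΔt ▸ by positivity
  have hkT : (k : ℝ) * Δt ≤ T := by
    rw [hΔt, mul_div_left_comm]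
    exact mul_le_of_le_one_right hT.le (div_le_one_of_le₀ (by exact_mod_cast hkN) N.cast_nonneg)
  have hstep : ∀ n ∈ Finset.Icc 1 k,
      Δt * ‖φ' ((n : ℝ) * Δt) - Δt⁻¹ • (φ ((n : ℝ) * Δt) - φ (((n : ℝ) - 1) * Δt))‖ ^ 2 ≤
        Δt ^ 2 / 3 * ∫ t in ((n : ℝ) - 1) * Δt..n * Δt, ‖φ'' t‖ ^ 2 := by
    intro n hn
    obtain ⟨hn1, hnk⟩ := Finset.mem_Icc.1 hn
    have hlo : 0 ≤ ((n : ℝ) - 1) * Δt :=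
      mul_nonneg (sub_nonneg.2 (by exact_mod_cast hn1)) hΔt0
    have hhi : (n : ℝ) * Δt ≤ T := le_trans (by gcongr) hkT
    have hcell : Icc (((n : ℝ) - 1) * Δt) (n * Δt) ⊆ Icc 0 T := Icc_subset_Icc hlo hhi
    have h := mul_norm_deriv_sub_slope_sq_le (by nlinarith)
      (fun t ht ↦ (hd1 t (hcell ht)).mono hcell) (fun t ht ↦ (hd2 t (hcell ht)).mono hcell)
      (hcont.mono hcell)
    rwa [slope_def_module, show (n : ℝ) * Δt - ((n : ℝ) - 1) * Δt = Δt by ring] at h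
  have hint : IntervalIntegrable (fun t ↦ ‖φ'' t‖ ^ 2) volume 0 (k * Δt) :=
    ContinuousOn.intervalIntegrable <| by
      rw [uIcc_of_le (by positivity)]
      exact ((hcont.mono (Icc_subset_Icc le_rfl hkT)).norm).pow 2
  rw [Finset.mul_sum, ← sum_integral_Icc_uniform_grid hΔt0 k hint, Finset.mul_sum]
  exact Finset.sum_le_sum hstep

/-- Discrete ℓ²-in-time O(Δt) consistency bound for backward Euler:
with `tₙ = nΔt`, `Δt = T/N`, and `rₙ = φ'(tₙ) − (φ(tₙ) − φ(tₙ₋₁))/Δt`,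
`Δt Σ_{n=1}^k ‖rₙ‖² ≤ (Δt²/3) ∫_0^{t_k} ‖φ''(t)‖² dt` for all `1 ≤ k ≤ N`. -/
theorem backward_euler_consistency_l2_bound
    {E : Type*} [NormedAddCommGroup E] [NormedSpace ℝ E] [CompleteSpace E]
    (T : ℝ) (hT : 0 < T) (N : ℕ) (hN : 0 < N) (Δt : ℝ) (hΔt : Δt = T / N)
    (φ φ' φ'' : ℝ → E)
    (hd1 : ∀ t ∈ Set.Icc (0 : ℝ) T, HasDerivWithinAt φ (φ' t) (Set.Icc (0 : ℝ) T) t)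
    (hd2 : ∀ t ∈ Set.Icc (0 : ℝ) T, HasDerivWithinAt φ' (φ'' t) (Set.Icc (0 : ℝ) T) t)
    (hcont : ContinuousOn φ'' (Set.Icc (0 : ℝ) T))
    (k : ℕ) (hk1 : 1 ≤ k) (hkN : k ≤ N) :
    Δt * ∑ n ∈ Finset.Icc 1 k,
        ‖φ' ((n : ℝ) * Δt) -
            Δt⁻¹ • (φ ((n : ℝ) * Δt) - φ (((n : ℝ) - 1) * Δt))‖ ^ 2 ≤
      (Δt ^ 2 / 3) * ∫ t in (0 : ℝ)..((k : ℝ) * Δt), ‖φ'' t‖ ^ 2 :=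
  backward_euler_consistency_l2_bound_general T hT N Δt hΔt φ φ' φ'' hd1 hd2 hcont k hkN
end

section
/- There exists a constant C > 0 such that for every real Banach space E, every T > 0, every N ∈ ℕ with N ≥ 2 and Δt := T/N, tₙ := nΔt, and every three times continuously differentiable function φ : [0, T] → E, the backward Euler consistency errors rₙ := φ'(tₙ) − (φ(tₙ) − φ(tₙ₋₁))/Δt satisfy, for every 2 ≤ k ≤ N, Δt · Σ_{n=2}^{k} ‖(rₙ − rₙ₋₁)/Δt‖² ≤ C Δt² ∫_0^{t_k} ‖φ'''(t)‖² dt. -/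
/-!
`Δt² ∂ₜⁿr` is the second-order difference `Δt φ'(tₙ) - Δt φ'(tₙ₋₁) - φ(tₙ) + 2 φ(tₙ₋₁) - φ(tₙ₋₂)`,
which vanishes on quadratics. Integrating by parts three times writes it as `∫ K • φ'''` over
`[tₙ₋₂, tₙ]` with a Peano kernel `0 ≤ K ≤ Δt² / 2`, so `‖∂ₜⁿr‖ ≤ ½ ∫_{tₙ₋₂}^{tₙ} ‖φ'''‖`, and
Cauchy–Schwarz gives `‖∂ₜⁿr‖² ≤ (Δt / 2) ∫_{tₙ₋₂}^{tₙ} ‖φ'''‖²`. Summing over `n` covers each cell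
`[tᵢ, tᵢ₊₁]` at most twice, whence the bound with `C = 1`.
-/

open MeasureTheory Set

theorem sq_intervalIntegral_le_mul_integral_sq {f : ℝ → ℝ} {a b : ℝ} (hab : a ≤ b)
    (hf : IntervalIntegrable f volume a b)
    (hf2 : IntervalIntegrable (fun t => f t ^ 2) volume a b) :
    (∫ t in a..b, f t) ^ 2 ≤ (b - a) * ∫ t in a..b, f t ^ 2 := by
  rcases hab.eq_or_lt with rfl | hlt
  · simp
  set I := ∫ t in a..b, f t
  set c := I / (b - a)
  -- integrate `2 c f ≤ f² + c²` and optimise in `c`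
  have hmono : ∫ t in a..b, 2 * c * f t ≤ ∫ t in a..b, (f t ^ 2 + c ^ 2) :=
    intervalIntegral.integral_mono_on hab (hf.const_mul _) (hf2.add intervalIntegrable_const)
      fun t _ => by nlinarith [sq_nonneg (f t - c)]
  rw [intervalIntegral.integral_const_mul,
    intervalIntegral.integral_add hf2 intervalIntegrable_const, intervalIntegral.integral_const,
    smul_eq_mul] at hmono
  have hba : 0 < b - a := sub_pos.2 hlt
  have hc : c * (b - a) = I := div_mul_cancel₀ _ hba.ne'
  nlinarith

theorem sum_integral_two_steps {g : ℝ → ℝ} {Δ : ℝ} (hΔ : 0 ≤ Δ) (k : ℕ)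
    (hg : IntervalIntegrable g volume 0 ((k + 1) * Δ)) :
    ∑ n ∈ Finset.Icc 2 (k + 1), ∫ t in ((n : ℝ) - 2) * Δ..(n : ℝ) * Δ, g t =
      (∫ t in 0..k * Δ, g t) + ∫ t in Δ..(k + 1) * Δ, g t := by
  induction k with
  | zero => simp
  | succ k ih =>
    push_cast at hg ⊢
    have hsub : ∀ {x y : ℝ}, 0 ≤ x → x ≤ (k + 1 + 1) * Δ → 0 ≤ y → y ≤ (k + 1 + 1) * Δ →
        IntervalIntegrable g volume x y := fun hx0 hx hy0 hy =>
      hg.mono_set (uIcc_subset_uIcc (mem_uIcc_of_le hx0 hx) (mem_uIcc_of_le hy0 hy))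
    have h0 : (0 : ℝ) ≤ k * Δ := by positivity
    have h1 : (k : ℝ) * Δ ≤ (k + 1) * Δ := by nlinarith
    have h2 : ((k : ℝ) + 1) * Δ ≤ (k + 1 + 1) * Δ := by nlinarith
    have h12 := h1.trans h2
    rw [Finset.sum_Icc_succ_top (by omega), ih (hsub le_rfl (by positivity) (by positivity) h2)]
    push_cast
    rw [show (k : ℝ) + 1 + 1 - 2 = k by ring,
      ← intervalIntegral.integral_add_adjacent_intervals (hsub le_rfl (by positivity) h0 h12)
        (hsub h0 h12 (by positivity) h2),
      ← intervalIntegral.integral_add_adjacent_intervals (hsub hΔ (by nlinarith) (by positivity) h2)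
        (hsub (by positivity) h2 (by positivity) le_rfl),
      ← intervalIntegral.integral_add_adjacent_intervals (hsub h0 h12 (by positivity) h2)
        (hsub (by positivity) h2 (by positivity) le_rfl)]
    ring

theorem sum_integral_two_steps_le {g : ℝ → ℝ} {Δ : ℝ} (hΔ : 0 ≤ Δ) {k : ℕ}
    (hg : IntervalIntegrable g volume 0 (k * Δ)) (hg0 : ∀ t, 0 ≤ g t) :
    ∑ n ∈ Finset.Icc 2 k, ∫ t in ((n : ℝ) - 2) * Δ..(n : ℝ) * Δ, g t ≤
      2 * ∫ t in 0..k * Δ, g t := by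
  cases k with
  | zero => simp
  | succ k =>
    push_cast at hg ⊢
    rw [sum_integral_two_steps hΔ k hg]
    have hpos : 0 ≤ᵐ[volume.restrict (Ioc 0 ((k + 1) * Δ))] g := Filter.Eventually.of_forall hg0
    have h1 : ∫ t in 0..k * Δ, g t ≤ ∫ t in 0..(k + 1) * Δ, g t :=
      intervalIntegral.integral_mono_interval le_rfl (by positivity) (by nlinarith) hpos hg
    have h2 : ∫ t in Δ..(k + 1) * Δ, g t ≤ ∫ t in 0..(k + 1) * Δ, g t :=
      intervalIntegral.integral_mono_interval hΔ (by nlinarith) le_rfl hpos hg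
    linarith

variable {E : Type*} [NormedAddCommGroup E] [NormedSpace ℝ E]

theorem norm_integral_smul_le_of_abs_le {f : ℝ → E} {K : ℝ → ℝ} {a b M : ℝ} (hab : a ≤ b)
    (hf : IntervalIntegrable f volume a b) (hK : ∀ s ∈ Ioc a b, |K s| ≤ M) :
    ‖∫ s in a..b, K s • f s‖ ≤ M * ∫ s in a..b, ‖f s‖ := by
  rw [← intervalIntegral.integral_const_mul]
  refine intervalIntegral.norm_integral_le_of_norm_le hab
    (Filter.Eventually.of_forall fun s hs => ?_) (hf.norm.const_mul M)
  rw [norm_smul, Real.norm_eq_abs]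
  exact mul_le_mul_of_nonneg_right (hK s hs) (norm_nonneg _)

structure HasDerivsUpToThreeOn (φ φ' φ'' φ''' : ℝ → E) (s : Set ℝ) : Prop where
  hasDeriv : ∀ t ∈ s, HasDerivWithinAt φ (φ' t) s t
  hasDeriv' : ∀ t ∈ s, HasDerivWithinAt φ' (φ'' t) s t
  hasDeriv'' : ∀ t ∈ s, HasDerivWithinAt φ'' (φ''' t) s t
  continuousOn''' : ContinuousOn φ''' s

namespace HasDerivsUpToThreeOn

variable {φ φ' φ'' φ''' : ℝ → E} {s : Set ℝ}

theorem mono (h : HasDerivsUpToThreeOn φ φ' φ'' φ''' s) {t : Set ℝ} (hts : t ⊆ s) :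
    HasDerivsUpToThreeOn φ φ' φ'' φ''' t where
  hasDeriv x hx := (h.hasDeriv x (hts hx)).mono hts
  hasDeriv' x hx := (h.hasDeriv' x (hts hx)).mono hts
  hasDeriv'' x hx := (h.hasDeriv'' x (hts hx)).mono hts
  continuousOn''' := h.continuousOn'''.mono hts

variable [CompleteSpace E] {a b : ℝ}

/-- Integration by parts three times against a quadratic kernel `K`. -/
theorem integral_smul_eq (h : HasDerivsUpToThreeOn φ φ' φ'' φ''' (Icc a b)) (hab : a ≤ b)
    {K K' : ℝ → ℝ} {c : ℝ} (hK : ∀ s, HasDerivAt K (K' s) s) (hK' : ∀ s, HasDerivAt K' c s) :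
    ∫ s in a..b, K s • φ''' s =
      (K b • φ'' b - K' b • φ' b + c • φ b) - (K a • φ'' a - K' a • φ' a + c • φ a) := by
  have hKc : Continuous K := continuous_iff_continuousAt.2 fun s => (hK s).continuousAt
  have hK'c : Continuous K' := continuous_iff_continuousAt.2 fun s => (hK' s).continuousAt
  refine intervalIntegral.integral_eq_sub_of_hasDerivAt_of_le hab
    (f := fun s => K s • φ'' s - K' s • φ' s + c • φ s) ?_ (fun x hx => ?_) ?_
  · exact ((hKc.continuousOn.smul fun t ht => (h.hasDeriv'' t ht).continuousWithinAt).sub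
      (hK'c.continuousOn.smul fun t ht => (h.hasDeriv' t ht).continuousWithinAt)).add
      ((continuousOn_const (c := c)).smul fun t ht => (h.hasDeriv t ht).continuousWithinAt)
  · have hnhds : Icc a b ∈ nhds x := Icc_mem_nhds hx.1 hx.2
    have hx' := Ioo_subset_Icc_self hx
    refine ((((hK x).smul ((h.hasDeriv'' x hx').hasDerivAt hnhds)).sub
      ((hK' x).smul ((h.hasDeriv' x hx').hasDerivAt hnhds))).add
      (((h.hasDeriv x hx').hasDerivAt hnhds).const_smul c)).congr_deriv ?_
    abel
  · exact (hKc.continuousOn.smul h.continuousOn''').intervalIntegrable_of_Icc hab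

variable {Δ m : ℝ}

theorem secondDifference_eq_integral (h : HasDerivsUpToThreeOn φ φ' φ'' φ''' (Icc a b))
    (hΔ : 0 ≤ Δ) (hm : m = a + Δ) (hb : b = m + Δ) :
    Δ • φ' b - Δ • φ' m - φ b + (2 : ℝ) • φ m - φ a =
      (∫ s in a..m, ((s - a) ^ 2 / 2) • φ''' s) +
        ∫ s in m..b, (Δ * (b - s) - (b - s) ^ 2 / 2) • φ''' s := by
  have ham : a ≤ m := by linarith
  have hmb : m ≤ b := by linarith
  have hKa : ∀ s, HasDerivAt (fun s => (s - a) ^ 2 / 2) (s - a) s := fun s =>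
    (((hasDerivAt_id' s).sub_const a).pow 2 |>.div_const 2).congr_deriv (by ring)
  have hKb : ∀ s, HasDerivAt (fun s => Δ * (b - s) - (b - s) ^ 2 / 2) (b - s - Δ) s := fun s =>
    ((((hasDerivAt_id' s).const_sub b).const_mul Δ).sub
      (((hasDerivAt_id' s).const_sub b).pow 2 |>.div_const 2)).congr_deriv (by ring)
  rw [(h.mono (Icc_subset_Icc_right hmb)).integral_smul_eq ham hKa (c := 1)
      fun s => (hasDerivAt_id' s).sub_const a,
    (h.mono (Icc_subset_Icc_left ham)).integral_smul_eq hmb hKb (c := -1)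
      fun s => by simpa using ((hasDerivAt_id' s).const_sub b).sub_const Δ]
  subst hm hb
  match_scalars <;> ring

theorem norm_consistencyError_sub_le (h : HasDerivsUpToThreeOn φ φ' φ'' φ''' (Icc a b))
    (hΔ : 0 < Δ) (hm : m = a + Δ) (hb : b = m + Δ) :
    ‖Δ⁻¹ • ((φ' b - Δ⁻¹ • (φ b - φ m)) - (φ' m - Δ⁻¹ • (φ m - φ a)))‖ ≤
      2⁻¹ * ∫ t in a..b, ‖φ''' t‖ := by
  have ham : a ≤ m := by linarith
  have hmb : m ≤ b := by linarith
  have hint : ∀ {c d}, a ≤ c → c ≤ d → d ≤ b → IntervalIntegrable φ''' volume c d :=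
    fun hac hcd hdb =>
      (h.continuousOn'''.mono (Icc_subset_Icc hac hdb)).intervalIntegrable_of_Icc hcd
  have hv : Δ⁻¹ • ((φ' b - Δ⁻¹ • (φ b - φ m)) - (φ' m - Δ⁻¹ • (φ m - φ a))) =
      (Δ ^ 2)⁻¹ • (Δ • φ' b - Δ • φ' m - φ b + (2 : ℝ) • φ m - φ a) := by
    match_scalars <;> field_simp
    norm_num
  have hKa : ∀ s ∈ Ioc a m, |(s - a) ^ 2 / 2| ≤ Δ ^ 2 / 2 := fun s hs => by
    rw [abs_of_nonneg (by positivity)]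
    nlinarith [hs.1, hs.2]
  have hKb : ∀ s ∈ Ioc m b, |Δ * (b - s) - (b - s) ^ 2 / 2| ≤ Δ ^ 2 / 2 := fun s hs => by
    rw [abs_le]
    constructor <;> nlinarith [hs.1, hs.2]
  rw [hv, secondDifference_eq_integral h hΔ.le hm hb, norm_smul,
    Real.norm_of_nonneg (by positivity),
    ← intervalIntegral.integral_add_adjacent_intervals (hint le_rfl ham hmb).norm
      (hint ham hmb le_rfl).norm]
  calc (Δ ^ 2)⁻¹ * ‖(∫ s in a..m, ((s - a) ^ 2 / 2) • φ''' s) +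
          ∫ s in m..b, (Δ * (b - s) - (b - s) ^ 2 / 2) • φ''' s‖
      ≤ (Δ ^ 2)⁻¹ * (Δ ^ 2 / 2 * (∫ t in a..m, ‖φ''' t‖) + Δ ^ 2 / 2 * ∫ t in m..b, ‖φ''' t‖) := by
        gcongr
        exact (norm_add_le _ _).trans (add_le_add
          (norm_integral_smul_le_of_abs_le ham (hint le_rfl ham hmb) hKa)
          (norm_integral_smul_le_of_abs_le hmb (hint ham hmb le_rfl) hKb))
    _ = 2⁻¹ * ((∫ t in a..m, ‖φ''' t‖) + ∫ t in m..b, ‖φ''' t‖) := by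
        field_simp

theorem sq_norm_consistencyError_sub_le (h : HasDerivsUpToThreeOn φ φ' φ'' φ''' (Icc a b))
    (hΔ : 0 < Δ) (hm : m = a + Δ) (hb : b = m + Δ) :
    ‖Δ⁻¹ • ((φ' b - Δ⁻¹ • (φ b - φ m)) - (φ' m - Δ⁻¹ • (φ m - φ a)))‖ ^ 2 ≤
      Δ / 2 * ∫ t in a..b, ‖φ''' t‖ ^ 2 := by
  have hab : a ≤ b := by linarith
  have hc : ContinuousOn (fun t => ‖φ''' t‖) (Icc a b) := h.continuousOn'''.norm
  calc _ ≤ (2⁻¹ * ∫ t in a..b, ‖φ''' t‖) ^ 2 :=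
        pow_le_pow_left₀ (norm_nonneg _) (norm_consistencyError_sub_le h hΔ hm hb) 2
    _ = 4⁻¹ * (∫ t in a..b, ‖φ''' t‖) ^ 2 := by ring
    _ ≤ 4⁻¹ * ((b - a) * ∫ t in a..b, ‖φ''' t‖ ^ 2) := by
        gcongr
        exact sq_intervalIntegral_le_mul_integral_sq hab (hc.intervalIntegrable_of_Icc hab)
          ((hc.pow 2).intervalIntegrable_of_Icc hab)
    _ = Δ / 2 * ∫ t in a..b, ‖φ''' t‖ ^ 2 := by
        rw [hb, hm]; ring

end HasDerivsUpToThreeOn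

/-- There is a universal constant `C > 0` such that for every real Banach space `E`,
every `T > 0`, `N ≥ 2`, `Δt = T/N`, `tₙ = nΔt`, and every three times continuously
differentiable `φ : [0,T] → E`, the backward divided differences of the backward
Euler consistency errors `rₙ = φ'(tₙ) − (φ(tₙ) − φ(tₙ₋₁))/Δt` satisfy
`Δt Σ_{n=2}^k ‖(rₙ − rₙ₋₁)/Δt‖² ≤ C Δt² ∫_0^{t_k} ‖φ'''(t)‖² dt` for all `2 ≤ k ≤ N`. -/
theorem backward_euler_consistency_difference_l2_bound :
    ∃ C : ℝ, 0 < C ∧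
      ∀ (E : Type) [NormedAddCommGroup E] [NormedSpace ℝ E] [CompleteSpace E]
        (T : ℝ), 0 < T → ∀ (N : ℕ), 2 ≤ N → ∀ (Δt : ℝ), Δt = T / N →
        ∀ (φ φ' φ'' φ''' : ℝ → E),
          (∀ t ∈ Set.Icc (0 : ℝ) T, HasDerivWithinAt φ (φ' t) (Set.Icc (0 : ℝ) T) t) →
          (∀ t ∈ Set.Icc (0 : ℝ) T, HasDerivWithinAt φ' (φ'' t) (Set.Icc (0 : ℝ) T) t) →
          (∀ t ∈ Set.Icc (0 : ℝ) T, HasDerivWithinAt φ'' (φ''' t) (Set.Icc (0 : ℝ) T) t) →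
          ContinuousOn φ''' (Set.Icc (0 : ℝ) T) →
          ∀ k : ℕ, 2 ≤ k → k ≤ N →
            Δt * ∑ n ∈ Finset.Icc 2 k,
                ‖Δt⁻¹ •
                    ((φ' ((n : ℝ) * Δt) -
                        Δt⁻¹ • (φ ((n : ℝ) * Δt) - φ (((n : ℝ) - 1) * Δt))) -
                      (φ' (((n : ℝ) - 1) * Δt) -
                        Δt⁻¹ • (φ (((n : ℝ) - 1) * Δt) - φ (((n : ℝ) - 2) * Δt))))‖ ^ 2 ≤
              C * Δt ^ 2 * ∫ t in (0 : ℝ)..((k : ℝ) * Δt), ‖φ''' t‖ ^ 2 := by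
  refine ⟨1, one_pos, fun E _ _ _ T hT N hN Δt hΔt φ φ' φ'' φ''' hφ hφ' hφ'' hφ''' k hk hkN => ?_⟩
  have h : HasDerivsUpToThreeOn φ φ' φ'' φ''' (Icc 0 T) := ⟨hφ, hφ', hφ'', hφ'''⟩
  have hN0 : (0 : ℝ) < N := by exact_mod_cast (by omega : 0 < N)
  have hΔ : 0 < Δt := hΔt ▸ div_pos hT hN0
  have hkT : (k : ℝ) * Δt ≤ T := by
    rw [hΔt, mul_div_assoc', div_le_iff₀ hN0, mul_comm T]
    gcongr
  have hsum := sum_integral_two_steps_le (g := fun t => ‖φ''' t‖ ^ 2) hΔ.le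
    (((h.continuousOn'''.norm.pow 2).mono (Icc_subset_Icc_right hkT)).intervalIntegrable_of_Icc
      (by positivity)) fun t => sq_nonneg ‖φ''' t‖
  calc _ ≤ Δt * ∑ n ∈ Finset.Icc 2 k,
          Δt / 2 * ∫ t in ((n : ℝ) - 2) * Δt..(n : ℝ) * Δt, ‖φ''' t‖ ^ 2 := by
        gcongr with n hn
        obtain ⟨h2n, hnk⟩ := Finset.mem_Icc.1 hn
        have h2n' : (2 : ℝ) ≤ n := by exact_mod_cast h2n
        have hnk' : (n : ℝ) ≤ k := by exact_mod_cast hnk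
        have hsub : Icc ((n - 2 : ℝ) * Δt) (n * Δt) ⊆ Icc 0 T :=
          Icc_subset_Icc (by nlinarith) (by nlinarith)
        exact (h.mono hsub).sq_norm_consistencyError_sub_le hΔ (by ring) (by ring)
    _ = Δt ^ 2 / 2 * ∑ n ∈ Finset.Icc 2 k,
          ∫ t in ((n : ℝ) - 2) * Δt..(n : ℝ) * Δt, ‖φ''' t‖ ^ 2 := by
        rw [← Finset.mul_sum]; ring
    _ ≤ Δt ^ 2 / 2 * (2 * ∫ t in (0 : ℝ)..((k : ℝ) * Δt), ‖φ''' t‖ ^ 2) := by gcongr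
    _ = 1 * Δt ^ 2 * ∫ t in (0 : ℝ)..((k : ℝ) * Δt), ‖φ''' t‖ ^ 2 := by ring
end
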